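/- Let G be a finite simple graph on n ≥ 1 vertices, let d ≥ 0 be an integer, and let A be a real symmetric n × n matrix indexed by V(G) such that |A_{u,v}| ≤ 1 for all u, v and A_{u,v} = 0 whenever u and v are not adjacent in G. Then χ^d(G) ≥ ⌈ max{ n/(n − n_d^+(A)), n/(n − n_d^-(A)) } ⌉. -/

import Mathlib

/-!
If `S` induces a subgraph of maximum degree at most `d`, then `|A u v| ≤ 1` and `A u v = 0`
off the edges give `xᵀ A x ≤ d ‖x‖²` for every `x` supported on `S`, while
`xᵀ A x > d ‖x‖²` for every nonzero `x` in the span of the eigenvectors with eigenvalue `> d`.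
These two subspaces therefore meet trivially, so `|S| + n_d^+(A) ≤ n`. Each colour class of a
`d`-improper `k`-colouring is such an `S`, whence `n ≤ k (n - n_d^+(A))`; the bound with
`n_d^-(A)` is the same argument for `-A`.
-/

open SimpleGraph Finset Matrix

namespace ImproperPaper

variable {V W : Type*}

/-- The strong product of two simple graphs. -/
def strongProd (G : SimpleGraph V) (H : SimpleGraph W) : SimpleGraph (V × W) where
  Adj p q := (p.1 = q.1 ∧ H.Adj p.2 q.2) ∨ (G.Adj p.1 q.1 ∧ p.2 = q.2) ∨
    (G.Adj p.1 q.1 ∧ H.Adj p.2 q.2)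
  symm := ⟨by
    rintro ⟨a, b⟩ ⟨x, y⟩ (⟨h1, h2⟩ | ⟨h1, h2⟩ | ⟨h1, h2⟩)
    · exact Or.inl ⟨h1.symm, h2.symm⟩
    · exact Or.inr (Or.inl ⟨h1.symm, h2.symm⟩)
    · exact Or.inr (Or.inr ⟨h1.symm, h2.symm⟩)⟩
  loopless := ⟨by
    rintro ⟨a, b⟩ (⟨h1, h2⟩ | ⟨h1, h2⟩ | ⟨h1, h2⟩)
    · exact H.irrefl h2
    · exact G.irrefl h1
    · exact G.irrefl h1⟩

/-- The lexicographical product of two simple graphs. -/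
def lexProd (G : SimpleGraph V) (H : SimpleGraph W) : SimpleGraph (V × W) where
  Adj p q := G.Adj p.1 q.1 ∨ (p.1 = q.1 ∧ H.Adj p.2 q.2)
  symm := ⟨by
    rintro ⟨a, b⟩ ⟨x, y⟩ (h | ⟨h1, h2⟩)
    · exact Or.inl h.symm
    · exact Or.inr ⟨h1.symm, h2.symm⟩⟩
  loopless := ⟨by
    rintro ⟨a, b⟩ (h | ⟨h1, h2⟩)
    · exact G.irrefl h
    · exact H.irrefl h2⟩

instance {G : SimpleGraph V} {H : SimpleGraph W} [DecidableEq V] [DecidableEq W]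
    [DecidableRel G.Adj] [DecidableRel H.Adj] : DecidableRel (strongProd G H).Adj := fun p q =>
  show Decidable ((p.1 = q.1 ∧ H.Adj p.2 q.2) ∨ (G.Adj p.1 q.1 ∧ p.2 = q.2) ∨
    (G.Adj p.1 q.1 ∧ H.Adj p.2 q.2)) from inferInstance

/-- A colouring is `d`-improper if every colour class induces a subgraph of
maximum degree at most `d`. -/
def IsImproperColoring (G : SimpleGraph V) (d : ℕ) {α : Type*} (c : V → α) : Prop :=
  ∀ v : V, ({w | G.Adj v w ∧ c w = c v} : Set V).ncard ≤ d

/-- The `d`-improper chromatic number. -/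
noncomputable def improperChromaticNumber (G : SimpleGraph V) (d : ℕ) : ℕ :=
  sInf {n | ∃ c : V → Fin n, IsImproperColoring G d c}

/-- A colouring is `t`-clustered if every monochromatic connected component has at
most `t` vertices. -/
def IsClusteredColoring (G : SimpleGraph V) (t : ℕ) {α : Type*} (c : V → α) : Prop :=
  ∀ v : V,
    ({w | Relation.ReflTransGen (fun a b => G.Adj a b ∧ c a = c b) v w} : Set V).ncard ≤ t

/-- The `t`-clustered chromatic number. -/
noncomputable def clusteredChromaticNumber (G : SimpleGraph V) (t : ℕ) : ℕ :=
  sInf {n | ∃ c : V → Fin n, IsClusteredColoring G t c}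

/-- The chromatic number: least `n` admitting a proper colouring with `n` colours. -/
noncomputable def chromNum (G : SimpleGraph V) : ℕ :=
  sInf {n | ∃ c : V → Fin n, ∀ u v, G.Adj u v → c u ≠ c v}

/-- The `b`-fold `d`-improper chromatic number: least number of colours in an assignment
of `b` colours to each vertex such that, for every colour `x`, the set of vertices whose
colour set contains `x` induces a subgraph of maximum degree at most `d`. -/
noncomputable def bFoldImproperChromaticNumber (G : SimpleGraph V) (b d : ℕ) : ℕ :=
  sInf {n | ∃ c : V → Finset (Fin n), (∀ v, (c v).card = b) ∧
    ∀ v : V, ∀ x ∈ c v, ({w | G.Adj v w ∧ x ∈ c w} : Set V).ncard ≤ d}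

/-- The (proper) `b`-fold chromatic number. -/
noncomputable def bFoldChromaticNumber (G : SimpleGraph V) (b : ℕ) : ℕ :=
  bFoldImproperChromaticNumber G b 0

/-- The `b`-fold `t`-clustered chromatic number. -/
noncomputable def bFoldClusteredChromaticNumber (G : SimpleGraph V) (b t : ℕ) : ℕ :=
  sInf {n | ∃ c : V → Finset (Fin n), (∀ v, (c v).card = b) ∧
    ∀ x : Fin n, ∀ v : V, x ∈ c v →
      ({w | Relation.ReflTransGen (fun a b' => G.Adj a b' ∧ x ∈ c a ∧ x ∈ c b') v w} :
        Set V).ncard ≤ t}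

/-- The fractional chromatic number `χ_f(G) = inf { χ_b(G)/b : b ≥ 1 }`. -/
noncomputable def fracChromaticNumber (G : SimpleGraph V) : ℝ :=
  sInf {x : ℝ | ∃ b : ℕ, 0 < b ∧ x = (bFoldChromaticNumber G b : ℝ) / b}

/-- The fractional `d`-improper chromatic number. -/
noncomputable def fracImproperChromaticNumber (G : SimpleGraph V) (d : ℕ) : ℝ :=
  sInf {x : ℝ | ∃ b : ℕ, 0 < b ∧ x = (bFoldImproperChromaticNumber G b d : ℝ) / b}

/-- The fractional `t`-clustered chromatic number. -/
noncomputable def fracClusteredChromaticNumber (G : SimpleGraph V) (t : ℕ) : ℝ :=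
  sInf {x : ℝ | ∃ b : ℕ, 0 < b ∧ x = (bFoldClusteredChromaticNumber G b t : ℝ) / b}

/-- `lam` lists the eigenvalues of the Hermitian matrix `A` (with multiplicity) in
non-increasing order. -/
def IsEigList {n : ℕ} {A : Matrix (Fin n) (Fin n) ℝ} (hA : A.IsHermitian)
    (lam : Fin n → ℝ) : Prop :=
  Antitone lam ∧ ∃ σ : Equiv.Perm (Fin n), lam = hA.eigenvalues ∘ σ

/-- The largest size of a vertex subset inducing a subgraph of maximum degree at most `d`. -/
noncomputable def maxImproperIndep (G : SimpleGraph V) (d : ℕ) : ℕ :=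
  sSup {k | ∃ s : Set V, s.ncard = k ∧ ∀ v ∈ s, ({w | w ∈ s ∧ G.Adj v w} : Set V).ncard ≤ d}

end ImproperPaper

section

open Module Submodule

variable {ι E : Type*} [Fintype ι] [NormedAddCommGroup E] [InnerProductSpace ℝ E]

namespace OrthonormalBasis

theorem finrank_span_restrict (b : OrthonormalBasis ι ℝ E) (s : Finset ι) :
    finrank ℝ (span ℝ (Set.range fun i : s => b i)) = #s :=
  (finrank_span_eq_card (b.orthonormal.comp _ Subtype.val_injective).linearIndependent).trans
    (Fintype.card_coe s)

theorem repr_eq_zero_of_mem_span_restrict (b : OrthonormalBasis ι ℝ E) {s : Finset ι} {x : E}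
    (hx : x ∈ span ℝ (Set.range fun i : s => b i)) {i : ι} (hi : i ∉ s) : b.repr x i = 0 := by
  suffices span ℝ (Set.range fun i : s => b i) ≤ LinearMap.ker (innerₛₗ ℝ (b i)) by
    simpa [b.repr_apply_apply] using this hx
  rw [span_le]
  rintro _ ⟨j, rfl⟩
  exact b.orthonormal.2 (ne_of_mem_of_not_mem j.2 hi).symm

theorem inner_apply_self_eq_sum (b : OrthonormalBasis ι ℝ E) {f : E →ₗ[ℝ] E} {μ : ι → ℝ}
    (hf : ∀ i, f (b i) = μ i • b i) (x : E) :
    inner ℝ x (f x) = ∑ i, μ i * b.repr x i ^ 2 := by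
  calc inner ℝ x (f x) = inner ℝ x (f (∑ i, b.repr x i • b i)) := by rw [b.sum_repr]
    _ = ∑ i, μ i * b.repr x i ^ 2 := by
      simp only [map_sum, map_smul, hf, inner_sum, inner_smul_right]
      refine sum_congr rfl fun i _ => ?_
      rw [real_inner_comm, ← b.repr_apply_apply]
      ring

theorem mul_norm_sq_lt_inner_apply_self (b : OrthonormalBasis ι ℝ E) {f : E →ₗ[ℝ] E}
    {μ : ι → ℝ} (hf : ∀ i, f (b i) = μ i • b i) {d : ℝ} {x : E} (hx : x ≠ 0)
    (hxμ : ∀ i, μ i ≤ d → b.repr x i = 0) :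
    d * ‖x‖ ^ 2 < inner ℝ x (f x) := by
  obtain ⟨j, hj⟩ : ∃ j, b.repr x j ≠ 0 := by
    by_contra! h
    exact hx (b.repr.map_eq_zero_iff.mp (PiLp.ext h))
  rw [b.inner_apply_self_eq_sum hf, ← b.repr.norm_map, EuclideanSpace.norm_sq_eq, mul_sum]
  simp only [Real.norm_eq_abs, sq_abs]
  refine sum_lt_sum (fun i _ => ?_) ⟨j, mem_univ j, ?_⟩
  · rcases le_or_gt (μ i) d with hi | hi
    · simp [hxμ i hi]
    · exact mul_le_mul_of_nonneg_right hi.le (sq_nonneg _)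
  · exact mul_lt_mul_of_pos_right (lt_of_not_ge (mt (hxμ j) hj)) (by positivity)

theorem finrank_add_card_lt_le_of_inner_apply_self_le [FiniteDimensional ℝ E]
    (b : OrthonormalBasis ι ℝ E) {f : E →ₗ[ℝ] E} {μ : ι → ℝ} (hf : ∀ i, f (b i) = μ i • b i)
    {Q : Submodule ℝ E} {d : ℝ} (hQ : ∀ x ∈ Q, inner ℝ x (f x) ≤ d * ‖x‖ ^ 2) :
    finrank ℝ Q + #{i | d < μ i} ≤ finrank ℝ E := by
  by_contra! h
  set P := span ℝ (Set.range fun i : ({i | d < μ i} : Finset ι) => b i)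
  have hPQ : 0 < finrank ℝ ↥(P ⊓ Q) := by
    have := finrank_sup_add_finrank_inf_eq P Q
    have := (P ⊔ Q).finrank_le
    rw [b.finrank_span_restrict] at *
    omega
  obtain ⟨⟨x, hxP, hxQ⟩, hx⟩ := finrank_pos_iff_exists_ne_zero.mp hPQ
  have hxμ : ∀ i, μ i ≤ d → b.repr x i = 0 := fun i hi =>
    b.repr_eq_zero_of_mem_span_restrict hxP (by simpa using hi)
  have := b.mul_norm_sq_lt_inner_apply_self hf (fun h => hx (by simp [h])) hxμ
  linarith [hQ x hxQ]

end OrthonormalBasis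

end

theorem Nat.cast_div_sub_le_of_le_mul_sub {n t k : ℕ} (h : n ≤ k * (n - t)) :
    (n : ℝ) / (n - t) ≤ k := by
  rcases le_or_gt n t with hnt | hnt
  · obtain rfl : n = 0 := by simpa [Nat.sub_eq_zero_of_le hnt] using h
    simp
  · have h' : (n : ℝ) ≤ k * ((n - t : ℕ) : ℝ) := by exact_mod_cast h
    rwa [Nat.cast_sub hnt.le, ← div_le_iff₀ (sub_pos.mpr (Nat.cast_lt.mpr hnt))] at h'

namespace ImproperPaper

section

variable {V : Type*} [Fintype V] (G : SimpleGraph V) [DecidableRel G.Adj]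

def IsImproperIndepSet (d : ℕ) (S : Finset V) : Prop :=
  ∀ v ∈ S, #{w ∈ S | G.Adj v w} ≤ d

variable {G}

theorem IsImproperIndepSet.dotProduct_mulVec_le [DecidableEq V] {d : ℕ} {S : Finset V}
    (hS : IsImproperIndepSet G d S) {A : Matrix V V ℝ} (hbd : ∀ u v, |A u v| ≤ 1)
    (hz : ∀ u v, ¬ G.Adj u v → A u v = 0) {x : V → ℝ} (hx : ∀ v ∉ S, x v = 0) :
    x ⬝ᵥ A *ᵥ x ≤ d * (x ⬝ᵥ x) := by
  -- `∑ v, w u v` is `x u ^ 2` times the degree of `u` in `S`, and by AM–GM each term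
  -- `x u * A u v * x v` is at most the average of `w u v` and `w v u`.
  set w : V → V → ℝ := fun u v => if G.Adj u v ∧ v ∈ S then x u ^ 2 else 0 with hw
  have hterm : ∀ u v, x u * (A u v * x v) ≤ (w u v + w v u) / 2 := by
    intro u v
    by_cases h : G.Adj u v ∧ u ∈ S ∧ v ∈ S
    · simp only [hw, if_pos (And.intro h.1 h.2.2), if_pos (And.intro h.1.symm h.2.1)]
      have := abs_le.mp (hbd u v)
      nlinarith [sq_nonneg (x u - x v), sq_nonneg (x u + x v)]
    · have : x u * (A u v * x v) = 0 := by
        by_cases huv : G.Adj u v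
        · by_cases hu : u ∈ S
          · simp [hx v (fun hv => h ⟨huv, hu, hv⟩)]
          · simp [hx u hu]
        · simp [hz u v huv]
      rw [this]
      positivity
  have hrow : ∀ u, ∑ v, w u v ≤ d * x u ^ 2 := by
    intro u
    have : ∑ v, w u v = #{v ∈ S | G.Adj u v} * x u ^ 2 := by
      rw [hw, ← sum_filter, sum_const, nsmul_eq_mul]
      congr 3
      ext v
      simp [and_comm]
    rw [this]
    by_cases hu : u ∈ S
    · exact mul_le_mul_of_nonneg_right (by exact_mod_cast hS u hu) (sq_nonneg _)
    · simp [hx u hu]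
  calc x ⬝ᵥ A *ᵥ x = ∑ u, ∑ v, x u * (A u v * x v) := by
        simp only [dotProduct, mulVec, mul_sum]
    _ ≤ ∑ u, ∑ v, (w u v + w v u) / 2 := sum_le_sum fun u _ => sum_le_sum fun v _ => hterm u v
    _ = ∑ u, ∑ v, w u v := by
        simp only [add_div, sum_add_distrib]
        rw [sum_comm (f := fun u v => w v u / 2), ← sum_add_distrib]
        simp only [← sum_add_distrib, add_halves]
    _ ≤ ∑ u, d * x u ^ 2 := sum_le_sum fun u _ => hrow u
    _ = d * (x ⬝ᵥ x) := by simp only [dotProduct, mul_sum, sq]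

theorem IsImproperIndepSet.card_add_card_lt_eigenvalues_le [DecidableEq V] {d : ℕ}
    {S : Finset V} (hS : IsImproperIndepSet G d S) {A : Matrix V V ℝ} (hbd : ∀ u v, |A u v| ≤ 1)
    (hz : ∀ u v, ¬ G.Adj u v → A u v = 0) (b : OrthonormalBasis V ℝ (EuclideanSpace ℝ V))
    {μ : V → ℝ} (hb : ∀ i, A *ᵥ b i = μ i • b i) :
    #S + #{i | (d : ℝ) < μ i} ≤ Fintype.card V := by
  set e := EuclideanSpace.basisFun V ℝ
  have hf : ∀ i, toLpLin 2 2 A (b i) = μ i • b i := fun i => by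
    ext1
    simp [toLpLin_apply, hb]
  have hQ : ∀ x ∈ Submodule.span ℝ (Set.range fun v : S => e v),
      inner ℝ x (toLpLin 2 2 A x) ≤ d * ‖x‖ ^ 2 := by
    intro x hx
    rw [← real_inner_self_eq_norm_sq, EuclideanSpace.inner_eq_star_dotProduct,
      EuclideanSpace.inner_eq_star_dotProduct]
    simpa [dotProduct_comm] using hS.dotProduct_mulVec_le hbd hz
      fun v hv => by simpa [e] using e.repr_eq_zero_of_mem_span_restrict hx hv
  simpa [e.finrank_span_restrict] using b.finrank_add_card_lt_le_of_inner_apply_self_le hf hQ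

theorem IsImproperColoring.card_le_mul_sub {d k t : ℕ} {c : V → Fin k}
    (hc : IsImproperColoring G d c)
    (ht : ∀ S, IsImproperIndepSet G d S → #S + t ≤ Fintype.card V) :
    Fintype.card V ≤ k * (Fintype.card V - t) := by
  have hclass : ∀ j, #{v | c v = j} ≤ Fintype.card V - t := fun j => by
    refine Nat.le_sub_of_add_le (ht _ fun v hv => ?_)
    rw [mem_filter] at hv
    convert hc v using 1
    rw [Set.ncard_eq_toFinset_card']
    congr 1
    ext w
    simp [hv.2, and_comm]
  calc Fintype.card V = ∑ j, #{v | c v = j} := card_eq_sum_card_fiberwise fun v _ => mem_univ _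
    _ ≤ ∑ _j : Fin k, (Fintype.card V - t) := sum_le_sum fun j _ => hclass j
    _ = k * (Fintype.card V - t) := by simp

theorem card_div_sub_le_improperChromaticNumber {d t : ℕ}
    (ht : ∀ S, IsImproperIndepSet G d S → #S + t ≤ Fintype.card V) :
    (Fintype.card V : ℝ) / (Fintype.card V - t) ≤ improperChromaticNumber G d := by
  have hne : {k | ∃ c : V → Fin k, IsImproperColoring G d c}.Nonempty := by
    refine ⟨_, Fintype.equivFin V, fun v => ?_⟩
    have : {w | G.Adj v w ∧ w = v} = ∅ := Set.eq_empty_of_forall_notMem fun w ⟨h, hw⟩ =>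
      G.irrefl (hw ▸ h)
    simp [(Fintype.equivFin V).injective.eq_iff, this]
  obtain ⟨c, hc⟩ := Nat.sInf_mem hne
  exact Nat.cast_div_sub_le_of_le_mul_sub (hc.card_le_mul_sub ht)

end

end ImproperPaper

open ImproperPaper in
theorem stmt_12_general {V : Type*} [Fintype V] [DecidableEq V] (G : SimpleGraph V)
    (d : ℕ) (A : Matrix V V ℝ) (hA : A.IsHermitian)
    (hbd : ∀ u v : V, |A u v| ≤ 1) (hz : ∀ u v : V, ¬ G.Adj u v → A u v = 0) :
    ⌈max ((Fintype.card V : ℝ) /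
          ((Fintype.card V : ℝ) - (({i : V | (d : ℝ) < hA.eigenvalues i} : Set V).ncard : ℝ)))
        ((Fintype.card V : ℝ) /
          ((Fintype.card V : ℝ) - (({i : V | hA.eigenvalues i < -(d : ℝ)} : Set V).ncard : ℝ)))⌉₊ ≤
      improperChromaticNumber G d := by
  classical
  have hncard (p : V → Prop) [DecidablePred p] : ({i | p i} : Set V).ncard = #{i | p i} := by
    simp [Set.ncard_eq_toFinset_card']
  rw [hncard, hncard, Nat.ceil_le]
  refine max_le (card_div_sub_le_improperChromaticNumber fun S hS => ?_)
    (card_div_sub_le_improperChromaticNumber fun S hS => ?_)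
  · exact hS.card_add_card_lt_eigenvalues_le hbd hz _ hA.mulVec_eigenvectorBasis
  · have hneg := hS.card_add_card_lt_eigenvalues_le (A := -A) (μ := -hA.eigenvalues)
      (by simpa using hbd) (fun u v h => by simp [hz u v h]) hA.eigenvectorBasis
      fun i => by rw [neg_mulVec, hA.mulVec_eigenvectorBasis, Pi.neg_apply, neg_smul]
    simpa [lt_neg] using hneg

open ImproperPaper in
theorem stmt_12 {V : Type*} [Fintype V] [DecidableEq V] [Nonempty V] (G : SimpleGraph V)
    (d : ℕ) (A : Matrix V V ℝ) (hA : A.IsHermitian)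
    (hbd : ∀ u v : V, |A u v| ≤ 1) (hz : ∀ u v : V, ¬ G.Adj u v → A u v = 0) :
    ⌈max ((Fintype.card V : ℝ) /
          ((Fintype.card V : ℝ) - (({i : V | (d : ℝ) < hA.eigenvalues i} : Set V).ncard : ℝ)))
        ((Fintype.card V : ℝ) /
          ((Fintype.card V : ℝ) - (({i : V | hA.eigenvalues i < -(d : ℝ)} : Set V).ncard : ℝ)))⌉₊ ≤
      improperChromaticNumber G d :=
  stmt_12_general G d A hA hbd hz
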